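/- For the 2-hook λ^n with n ≥ 3, for every k with 2 ≤ k ≤ n - 1 there exists E ⊆ E_n such that t = λ^n + ω^n + v(E) is a permutation of [n] with t_k = n - 1; that is, the number of indices k ∈ {2, ..., n-1} for which such an E exists is exactly n - 2. -/
import Mathlib
set_option maxHeartbeats 1000000


def vset (n : ℕ) (E : Finset (Fin n × Fin n)) (i : Fin n) : ℤ :=
  ∑ e ∈ E, ((if e.2 = i then (1 : ℤ) else 0) - (if e.1 = i then (1 : ℤ) else 0))

def omegaVec (n : ℕ) (i : Fin n) : ℤ := (n : ℤ) - 1 - (i : ℤ)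

def twoHook (n : ℕ) (i : Fin n) : ℤ :=
  if i.val = 0 then 2 else if i.val = n - 1 then 0 else 1

theorem stmt_13 (n : ℕ) (hn : 3 ≤ n) :
    ∀ k : Fin n, 1 ≤ k.val → k.val ≤ n - 2 →
      ∃ E : Finset (Fin n × Fin n), (∀ e ∈ E, e.1 < e.2) ∧
        (∀ i : Fin n,
          1 ≤ twoHook n i + omegaVec n i + vset n E i ∧
            twoHook n i + omegaVec n i + vset n E i ≤ (n : ℤ)) ∧
        Function.Injective (fun i => twoHook n i + omegaVec n i + vset n E i) ∧
        twoHook n k + omegaVec n k + vset n E k = (n : ℤ) - 1 := by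
  intro k hk1 hk2
  set z : Fin n := ⟨0, by omega⟩ with hz
  set l : Fin n := ⟨n - 1, by omega⟩ with hl
  set o : Fin n := ⟨1, by omega⟩ with ho
  set S : Finset (Fin n × Fin n) :=
    (Finset.Ico o k).image (fun a => (a, k)) with hS
  have hmemS : ∀ e : Fin n × Fin n, e ∈ S ↔ (1 ≤ e.1.val ∧ e.1.val < k.val ∧ e.2 = k) := by
    intro e
    simp only [hS, Finset.mem_image, Finset.mem_Ico]
    constructor
    · rintro ⟨a, ⟨ha1, ha2⟩, rfl⟩
      exact ⟨ha1, ha2, rfl⟩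
    · rintro ⟨h1, h2, h3⟩
      exact ⟨e.1, ⟨h1, h2⟩, by rw [← h3]⟩
  have hzl : (z, l) ∉ S := by
    intro h
    have := (hmemS _).mp h
    simp only at this
    have : l = k := this.2.2
    have : l.val = k.val := by rw [this]
    simp only [hl] at this
    omega
  set E : Finset (Fin n × Fin n) := insert (z, l) S with hE
  -- compute vset
  have hv : ∀ i : Fin n, vset n E i =
      ((if l = i then (1:ℤ) else 0) - (if z = i then (1:ℤ) else 0)) +
      ((if k = i then ((k.val : ℤ) - 1) else 0) -
        (if 1 ≤ i.val ∧ i.val < k.val then (1:ℤ) else 0)) := by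
    intro i
    rw [hE]
    rw [show vset n (insert (z,l) S) i =
      ((if l = i then (1:ℤ) else 0) - (if z = i then (1:ℤ) else 0)) +
      ∑ e ∈ S, ((if e.2 = i then (1:ℤ) else 0) - (if e.1 = i then (1:ℤ) else 0))
      from Finset.sum_insert hzl]
    congr 1
    rw [hS, Finset.sum_image (by intro a _ b _ h; exact (Prod.mk.injEq _ _ _ _).mp h |>.1)]
    simp only
    rw [Finset.sum_sub_distrib]
    have h1 : ∑ _x ∈ Finset.Ico o k, (if k = i then (1:ℤ) else 0) =
        if k = i then ((k.val : ℤ) - 1) else 0 := by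
      split_ifs with h
      · rw [Finset.sum_const, Fin.card_Ico]
        simp only [ho, nsmul_eq_mul, mul_one]
        push_cast
        omega
      · exact Finset.sum_const_zero
    have h2 : ∑ a ∈ Finset.Ico o k, (if a = i then (1:ℤ) else 0) =
        if i ∈ Finset.Ico o k then (1:ℤ) else 0 := Finset.sum_ite_eq' _ _ _
    rw [h1, h2]
    have hmem : i ∈ Finset.Ico o k ↔ (1 ≤ i.val ∧ i.val < k.val) := by
      rw [Finset.mem_Ico]
      constructor
      · intro ⟨a, b⟩; exact ⟨a, b⟩
      · intro ⟨a, b⟩; exact ⟨a, b⟩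
    simp only [hmem]
  -- the explicit value function
  have key : ∀ i : Fin n, twoHook n i + omegaVec n i + vset n E i =
      if i.val = 0 then (n : ℤ)
      else if i.val < k.val then (n : ℤ) - i.val - 1
      else if i.val = k.val then (n : ℤ) - 1
      else (n : ℤ) - i.val := by
    intro i
    rw [hv i, twoHook, omegaVec]
    have hik : k = i ↔ k.val = i.val := ⟨fun h => by rw [h], fun h => Fin.ext h⟩
    have hil : l = i ↔ n - 1 = i.val := ⟨fun h => by rw [← h], fun h => Fin.ext h⟩
    have hiz : z = i ↔ 0 = i.val := ⟨fun h => by rw [← h], fun h => Fin.ext h⟩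
    have hin : i.val < n := i.2
    split_ifs <;> omega
  refine ⟨E, ?_, ?_, ?_, ?_⟩
  · intro e he
    rw [hE, Finset.mem_insert] at he
    rcases he with rfl | he
    · simp only [Prod.fst, Prod.snd]
      rw [Fin.lt_def]; simp [hz, hl]; omega
    · have := (hmemS _).mp he
      rw [Fin.lt_def]
      have h3 : e.2.val = k.val := by rw [this.2.2]
      omega
  · intro i
    rw [key i]
    have hin : i.val < n := i.2
    split_ifs <;> constructor <;> push_cast <;> omega
  · have hfun : (fun i => twoHook n i + omegaVec n i + vset n E i) =
        (fun i : Fin n => if i.val = 0 then (n : ℤ)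
          else if i.val < k.val then (n : ℤ) - i.val - 1
          else if i.val = k.val then (n : ℤ) - 1
          else (n : ℤ) - i.val) := funext key
    rw [hfun]
    clear_value E S z l o
    clear hE hS key hfun hv hmemS hzl hz hl ho
    intro i j hij
    simp only at hij
    have hin : i.val < n := i.2
    have hjn : j.val < n := j.2
    apply Fin.ext
    split_ifs at hij <;> omega
  · rw [key k]
    have : ¬ (k.val = 0) := by omega
    have h2 : ¬ (k.val < k.val) := by omega
    simp [this, h2]
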